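/- arXiv:1207.5164 — 2 statements merged into one kernel-verified Lean document; each statement's English description precedes it below -/
import Mathlib

section
/- The function Λ(Θ) := Σ_{i=1}^m ∫_{t_{i−1}}^{t_i} ψ_N( log Σ_{j=1}^{n+1} e^{θ_ij} P(y_{j−1} − u < V_1 ≤ y_j − u) ) du is finite and differentiable at every Θ ∈ ℝ^{m(n+1)}, with ∂Λ(Θ)/∂θ_ij = ∫_{t_{i−1}}^{t_i} ψ_N′( log Σ_{k=1}^{n+1} e^{θ_ik} P(y_{k−1} − u < V_1 ≤ y_k − u) ) · [ e^{θ_ij} P(y_{j−1} − u < V_1 ≤ y_j − u) / Σ_{k=1}^{n+1} e^{θ_ik} P(y_{k−1} − u < V_1 ≤ y_k − u) ] du, and this partial derivative is bounded in absolute value by (t_i − t_{i−1}) · max{ |ψ_N′(max_k θ_ik)|, |ψ_N′(min_k θ_ik)| }. -/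
/-!
For `u ∈ (0, T]` the numbers `p_j(u) = P(y_{j-1} - u < V ≤ y_j - u)` telescope to
`F(T + M - u) - F(-u) = 1`, so they form a probability vector and the inner function
`θ ↦ log ∑ e^{θ_j} p_j(u)` is a weighted log-sum-exp. It lies between `min θ` and `max θ`, and
its gradient is the softmax vector, which has `ℓ¹`-norm `1`. Hence the `θ`-derivative of the
integrand is bounded by `sup |ψ'|` over a compact interval, uniformly in `u` and locally
uniformly in `θ`, which justifies differentiating under the integral sign. Since `ψ'` is
monotone, `|ψ'(log ∑ e^{θ_j} p_j)| ≤ max (|ψ'(max θ)|, |ψ'(min θ)|)`, which gives the bound.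
-/

open MeasureTheory Filter Set
open scoped ENNReal

noncomputable section

namespace Stmt5

/-- `P(y_{j-1} − u < V ≤ y_j − u)`, where `μ` is the law of `V`. -/
def pr (μ : Measure ℝ) {n : ℕ} (y : Fin (n + 2) → ℝ) (j : Fin (n + 1)) (u : ℝ) : ℝ :=
  (μ (Ioc (y j.castSucc - u) (y j.succ - u))).toReal

/-- `Λ(Θ) = ∑_i ∫_{t_{i-1}}^{t_i} ψ_N( log ∑_j e^{θ_ij} P(y_{j-1}−u < V ≤ y_j−u) ) du`. -/
def Lambda (ψ : ℝ → ℝ) (μ : Measure ℝ) {m n : ℕ}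
    (t : Fin (m + 1) → ℝ) (y : Fin (n + 2) → ℝ)
    (Θ : Fin m × Fin (n + 1) → ℝ) : ℝ :=
  ∑ i : Fin m, ∫ u in Ioc (t i.castSucc) (t i.succ),
    ψ (Real.log (∑ j : Fin (n + 1), Real.exp (Θ (i, j)) * pr μ y j u))

/-- The claimed partial derivative `∂Λ/∂θ_ij`. -/
def LambdaDeriv (ψ : ℝ → ℝ) (μ : Measure ℝ) {m n : ℕ}
    (t : Fin (m + 1) → ℝ) (y : Fin (n + 2) → ℝ)
    (Θ : Fin m × Fin (n + 1) → ℝ) (i : Fin m) (j : Fin (n + 1)) : ℝ :=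
  ∫ u in Ioc (t i.castSucc) (t i.succ),
    deriv ψ (Real.log (∑ k : Fin (n + 1), Real.exp (Θ (i, k)) * pr μ y k u)) *
      (Real.exp (Θ (i, j)) * pr μ y j u /
        ∑ k : Fin (n + 1), Real.exp (Θ (i, k)) * pr μ y k u)

open ProbabilityTheory

lemma Fin.sum_univ_succ_sub_castSucc {M : Type*} [AddCommGroup M] {n : ℕ} (f : Fin (n + 1) → M) :
    ∑ j : Fin n, (f j.succ - f j.castSucc) = f (Fin.last n) - f 0 := by
  rw [Finset.sum_sub_distrib, ← add_sub_cancel_left (f 0) (∑ j : Fin n, f j.succ),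
    ← Fin.sum_univ_succ, Fin.sum_univ_castSucc]
  abel

lemma pr_eq_cdf_sub (μ : Measure ℝ) [IsProbabilityMeasure μ] {n : ℕ} {y : Fin (n + 2) → ℝ}
    (hy : Monotone y) (j : Fin (n + 1)) (u : ℝ) :
    pr μ y j u = cdf μ (y j.succ - u) - cdf μ (y j.castSucc - u) := by
  have h := (cdf μ).measure_Ioc (y j.castSucc - u) (y j.succ - u)
  rw [measure_cdf] at h
  rw [pr, h, ENNReal.toReal_ofReal (sub_nonneg.2 (monotone_cdf μ ?_))]
  exact sub_le_sub_right (hy (Fin.castSucc_le_succ j)) u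

lemma measurable_pr (μ : Measure ℝ) [IsProbabilityMeasure μ] {n : ℕ} {y : Fin (n + 2) → ℝ}
    (hy : Monotone y) (j : Fin (n + 1)) : Measurable (pr μ y j) := by
  have hF : ∀ c : ℝ, Measurable fun u => cdf μ (c - u) := fun c =>
    ((monotone_cdf μ).comp_antitone fun _ _ h => sub_le_sub_left h c).measurable
  rw [funext (pr_eq_cdf_sub μ hy j)]
  exact (hF _).sub (hF _)

lemma cdf_eq_zero_of_lt (μ : Measure ℝ) [IsProbabilityMeasure μ] {a x : ℝ}
    (hμ : μ (Ici a) = 1) (hx : x < a) : cdf μ x = 0 := by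
  rw [cdf_eq_real, measureReal_eq_zero_iff]
  refine measure_mono_null (fun z hz => ?_) ((prob_compl_eq_zero_iff measurableSet_Ici).2 hμ)
  exact not_le.2 (lt_of_le_of_lt (mem_Iic.1 hz) hx)

lemma cdf_eq_one_of_le (μ : Measure ℝ) [IsProbabilityMeasure μ] {b x : ℝ}
    (hμ : μ (Iic b) = 1) (hx : b ≤ x) : cdf μ x = 1 := by
  rw [cdf_eq_real, measureReal_def, ← ENNReal.toReal_one]
  congr
  exact le_antisymm prob_le_one (hμ ▸ measure_mono (Iic_subset_Iic.2 hx))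

/-- Openness of `Ioc 0 T` at `0` matters: `μ` may charge `{0}`. -/
lemma pr_mem_stdSimplex (μ : Measure ℝ) [IsProbabilityMeasure μ] {M T : ℝ}
    (hsupp : μ (Icc (0 : ℝ) M) = 1) {n : ℕ} {y : Fin (n + 2) → ℝ}
    (hy0 : y 0 = 0) (hy : Monotone y) (hyl : y (Fin.last (n + 1)) = T + M)
    {u : ℝ} (hu : u ∈ Ioc 0 T) :
    (fun j => pr μ y j u) ∈ stdSimplex ℝ (Fin (n + 1)) := by
  refine ⟨fun j => ENNReal.toReal_nonneg, ?_⟩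
  have hIci : μ (Ici 0) = 1 := le_antisymm prob_le_one (hsupp ▸ measure_mono Icc_subset_Ici_self)
  have hIic : μ (Iic M) = 1 := le_antisymm prob_le_one (hsupp ▸ measure_mono Icc_subset_Iic_self)
  simp only [pr_eq_cdf_sub μ hy]
  rw [Fin.sum_univ_succ_sub_castSucc (fun k => cdf μ (y k - u)), hy0, hyl,
    cdf_eq_one_of_le μ hIic (by linarith [hu.2]), cdf_eq_zero_of_lt μ hIci (by linarith [hu.1]),
    sub_zero]

section WeightedLogSumExp

variable {ι : Type*} [Fintype ι]

def weightedLogSumExp (p θ : ι → ℝ) : ℝ :=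
  Real.log (∑ j, Real.exp (θ j) * p j)

def weightedSoftmax (p θ : ι → ℝ) : (ι → ℝ) →L[ℝ] ℝ :=
  (∑ j, Real.exp (θ j) * p j)⁻¹ • ∑ j, (Real.exp (θ j) * p j) • ContinuousLinearMap.proj j

variable {p : ι → ℝ}

lemma exp_le_sum_exp_mul (hp : p ∈ stdSimplex ℝ ι) {θ : ι → ℝ} {a : ℝ} (h : ∀ j, a ≤ θ j) :
    Real.exp a ≤ ∑ j, Real.exp (θ j) * p j :=
  calc Real.exp a = ∑ j, Real.exp a * p j := by rw [← Finset.mul_sum, hp.2, mul_one]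
    _ ≤ ∑ j, Real.exp (θ j) * p j := Finset.sum_le_sum fun j _ =>
      mul_le_mul_of_nonneg_right (Real.exp_le_exp.2 (h j)) (hp.1 j)

lemma sum_exp_mul_le_exp (hp : p ∈ stdSimplex ℝ ι) {θ : ι → ℝ} {b : ℝ} (h : ∀ j, θ j ≤ b) :
    ∑ j, Real.exp (θ j) * p j ≤ Real.exp b :=
  calc ∑ j, Real.exp (θ j) * p j ≤ ∑ j, Real.exp b * p j := Finset.sum_le_sum fun j _ =>
      mul_le_mul_of_nonneg_right (Real.exp_le_exp.2 (h j)) (hp.1 j)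
    _ = Real.exp b := by rw [← Finset.mul_sum, hp.2, mul_one]

lemma sum_exp_mul_pos (hp : p ∈ stdSimplex ℝ ι) (θ : ι → ℝ) :
    0 < ∑ j, Real.exp (θ j) * p j :=
  (Real.exp_pos _).trans_le
    (exp_le_sum_exp_mul hp fun j => neg_le_of_abs_le (norm_le_pi_norm θ j))

lemma le_weightedLogSumExp (hp : p ∈ stdSimplex ℝ ι) {θ : ι → ℝ} {a : ℝ} (h : ∀ j, a ≤ θ j) :
    a ≤ weightedLogSumExp p θ :=
  (Real.le_log_iff_exp_le (sum_exp_mul_pos hp θ)).2 (exp_le_sum_exp_mul hp h)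

lemma weightedLogSumExp_le (hp : p ∈ stdSimplex ℝ ι) {θ : ι → ℝ} {b : ℝ} (h : ∀ j, θ j ≤ b) :
    weightedLogSumExp p θ ≤ b :=
  (Real.log_le_iff_le_exp (sum_exp_mul_pos hp θ)).2 (sum_exp_mul_le_exp hp h)

lemma abs_weightedLogSumExp_le_norm (hp : p ∈ stdSimplex ℝ ι) (θ : ι → ℝ) :
    |weightedLogSumExp p θ| ≤ ‖θ‖ :=
  abs_le.2 ⟨le_weightedLogSumExp hp fun j => neg_le_of_abs_le (norm_le_pi_norm θ j),
    weightedLogSumExp_le hp fun j => le_of_abs_le (norm_le_pi_norm θ j)⟩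

lemma hasFDerivAt_weightedLogSumExp {θ : ι → ℝ} (hS : 0 < ∑ j, Real.exp (θ j) * p j) :
    HasFDerivAt (weightedLogSumExp p) (weightedSoftmax p θ) θ := by
  have hsum : HasFDerivAt (fun θ : ι → ℝ => ∑ j, Real.exp (θ j) * p j)
      (∑ j, (Real.exp (θ j) * p j) • ContinuousLinearMap.proj j) θ :=
    HasFDerivAt.fun_sum fun j _ =>
      ((hasFDerivAt_apply (𝕜 := ℝ) j θ).exp.mul_const (p j)).congr_fderiv
        (by rw [smul_smul, mul_comm])
  exact (Real.hasDerivAt_log hS.ne').comp_hasFDerivAt θ hsum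

lemma weightedSoftmax_apply_single [DecidableEq ι] (θ : ι → ℝ) (j : ι) :
    weightedSoftmax p θ (Pi.single j 1) =
      Real.exp (θ j) * p j / ∑ k, Real.exp (θ k) * p k := by
  simp [weightedSoftmax, Pi.single_apply, div_eq_inv_mul]

lemma norm_weightedSoftmax_le_one (hp : p ∈ stdSimplex ℝ ι) (θ : ι → ℝ) :
    ‖weightedSoftmax p θ‖ ≤ 1 := by
  have hS := sum_exp_mul_pos hp θ
  have hproj : ∀ j, ‖ContinuousLinearMap.proj (R := ℝ) (φ := fun _ : ι => ℝ) j‖ ≤ 1 := fun j =>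
    ContinuousLinearMap.opNorm_le_bound _ zero_le_one fun v => by
      simpa using norm_le_pi_norm v j
  calc ‖weightedSoftmax p θ‖
      ≤ (∑ j, Real.exp (θ j) * p j)⁻¹ * ∑ j, Real.exp (θ j) * p j * 1 := by
        rw [weightedSoftmax, norm_smul, Real.norm_of_nonneg (inv_nonneg.2 hS.le)]
        refine mul_le_mul_of_nonneg_left ((norm_sum_le _ _).trans
          (Finset.sum_le_sum fun j _ => ?_)) (inv_nonneg.2 hS.le)
        rw [norm_smul, Real.norm_of_nonneg (mul_nonneg (Real.exp_pos _).le (hp.1 j))]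
        exact mul_le_mul_of_nonneg_left (hproj j) (mul_nonneg (Real.exp_pos _).le (hp.1 j))
    _ = 1 := by simp [inv_mul_cancel₀ hS.ne']

lemma abs_comp_weightedLogSumExp_le [Nonempty ι] {g : ℝ → ℝ} (hg : Monotone g)
    (hp : p ∈ stdSimplex ℝ ι) (θ : ι → ℝ) :
    |g (weightedLogSumExp p θ)| ≤
      max |g (Finset.univ.sup' Finset.univ_nonempty θ)|
        |g (Finset.univ.inf' Finset.univ_nonempty θ)| := by
  rw [max_comm]
  exact abs_le_max_abs_abs
    (hg (le_weightedLogSumExp hp fun j => Finset.inf'_le _ (Finset.mem_univ j)))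
    (hg (weightedLogSumExp_le hp fun j => Finset.le_sup' _ (Finset.mem_univ j)))

lemma exists_bound_comp_weightedLogSumExp {g : ℝ → ℝ} (hg : Continuous g) (R : ℝ) :
    ∃ C, ∀ q ∈ stdSimplex ℝ ι, ∀ θ : ι → ℝ, ‖θ‖ ≤ R → ‖g (weightedLogSumExp q θ)‖ ≤ C := by
  obtain ⟨C, hC⟩ := (isCompact_closedBall (0 : ℝ) R).exists_bound_of_continuousOn hg.continuousOn
  exact ⟨C, fun q hq θ hθ => hC _
    (mem_closedBall_zero_iff.2 ((abs_weightedLogSumExp_le_norm hq θ).trans hθ))⟩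

end WeightedLogSumExp

section ParametricIntegral

variable {ι α : Type*} [Fintype ι] [MeasurableSpace α] {ν : Measure α} {ψ : ℝ → ℝ}
  {p : α → ι → ℝ}

lemma measurable_weightedLogSumExp (hp : Measurable p) (θ : ι → ℝ) :
    Measurable fun u => weightedLogSumExp (p u) θ := by
  unfold weightedLogSumExp
  fun_prop

lemma aestronglyMeasurable_deriv_smul_weightedSoftmax (hψ : Continuous (deriv ψ))
    (hp : Measurable p) (θ : ι → ℝ) :
    AEStronglyMeasurable
      (fun u => deriv ψ (weightedLogSumExp (p u) θ) • weightedSoftmax (p u) θ) ν := by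
  have hψm : Measurable fun u => deriv ψ (weightedLogSumExp (p u) θ) :=
    hψ.measurable.comp (measurable_weightedLogSumExp hp θ)
  unfold weightedSoftmax
  fun_prop

lemma exists_bound_deriv_smul_weightedSoftmax (hψ : Continuous (deriv ψ)) (R : ℝ) :
    ∃ C, ∀ q ∈ stdSimplex ℝ ι, ∀ θ : ι → ℝ, ‖θ‖ ≤ R →
      ‖deriv ψ (weightedLogSumExp q θ) • weightedSoftmax q θ‖ ≤ C := by
  obtain ⟨C, hC⟩ := exists_bound_comp_weightedLogSumExp (ι := ι) hψ R
  refine ⟨C, fun q hq θ hθ => ?_⟩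
  rw [norm_smul]
  exact (mul_le_of_le_one_right (norm_nonneg _) (norm_weightedSoftmax_le_one hq θ)).trans
    (hC q hq θ hθ)

lemma integrable_deriv_smul_weightedSoftmax [IsFiniteMeasure ν] (hψ : Continuous (deriv ψ))
    (hpm : Measurable p) (hp : ∀ᵐ u ∂ν, p u ∈ stdSimplex ℝ ι) (θ : ι → ℝ) :
    Integrable (fun u => deriv ψ (weightedLogSumExp (p u) θ) • weightedSoftmax (p u) θ) ν := by
  obtain ⟨C, hC⟩ := exists_bound_deriv_smul_weightedSoftmax (ι := ι) hψ ‖θ‖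
  refine (integrable_const C).mono' (aestronglyMeasurable_deriv_smul_weightedSoftmax hψ hpm θ) ?_
  filter_upwards [hp] with u hu using hC _ hu θ le_rfl

theorem hasFDerivAt_integral_comp_weightedLogSumExp [IsFiniteMeasure ν] (hψ : ContDiff ℝ 1 ψ)
    (hpm : Measurable p) (hp : ∀ᵐ u ∂ν, p u ∈ stdSimplex ℝ ι) (θ : ι → ℝ) :
    HasFDerivAt (fun θ => ∫ u, ψ (weightedLogSumExp (p u) θ) ∂ν)
      (∫ u, deriv ψ (weightedLogSumExp (p u) θ) • weightedSoftmax (p u) θ ∂ν) θ := by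
  have hψ' : Continuous (deriv ψ) := hψ.continuous_deriv le_rfl
  obtain ⟨C, hC⟩ := exists_bound_deriv_smul_weightedSoftmax (ι := ι) hψ' (‖θ‖ + 1)
  obtain ⟨C₀, hC₀⟩ := exists_bound_comp_weightedLogSumExp (ι := ι) hψ.continuous ‖θ‖
  have hF_int : Integrable (fun u => ψ (weightedLogSumExp (p u) θ)) ν := by
    refine (integrable_const C₀).mono'
      (hψ.continuous.measurable.comp (measurable_weightedLogSumExp hpm θ)).aestronglyMeasurable ?_
    filter_upwards [hp] with u hu using hC₀ _ hu θ le_rfl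
  have hball : ∀ x ∈ Metric.ball θ 1, ‖x‖ ≤ ‖θ‖ + 1 := fun x hx => by
    have := norm_le_norm_add_norm_sub' x θ
    have := (mem_ball_iff_norm.1 hx).le
    linarith
  refine hasFDerivAt_integral_of_dominated_of_fderiv_le
    (F' := fun x u => deriv ψ (weightedLogSumExp (p u) x) • weightedSoftmax (p u) x)
    (Metric.ball_mem_nhds θ one_pos)
    (Eventually.of_forall fun x =>
      (hψ.continuous.measurable.comp (measurable_weightedLogSumExp hpm x)).aestronglyMeasurable)
    hF_int (aestronglyMeasurable_deriv_smul_weightedSoftmax hψ' hpm θ) ?_ (integrable_const C) ?_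
  · filter_upwards [hp] with u hu x hx using hC _ hu x (hball x hx)
  · filter_upwards [hp] with u hu x _ using
      (hψ.differentiable one_ne_zero _).hasDerivAt.comp_hasFDerivAt x
        (hasFDerivAt_weightedLogSumExp (sum_exp_mul_pos hu x))

lemma integral_deriv_smul_weightedSoftmax_apply_single [IsFiniteMeasure ν] [DecidableEq ι]
    (hψ : Continuous (deriv ψ)) (hpm : Measurable p) (hp : ∀ᵐ u ∂ν, p u ∈ stdSimplex ℝ ι)
    (θ : ι → ℝ) (j : ι) :
    (∫ u, deriv ψ (weightedLogSumExp (p u) θ) • weightedSoftmax (p u) θ ∂ν) (Pi.single j 1) =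
      ∫ u, deriv ψ (weightedLogSumExp (p u) θ) *
        (Real.exp (θ j) * p u j / ∑ k, Real.exp (θ k) * p u k) ∂ν := by
  rw [ContinuousLinearMap.integral_apply (integrable_deriv_smul_weightedSoftmax hψ hpm hp θ)]
  simp only [FunLike.coe_smul, Pi.smul_apply, weightedSoftmax_apply_single, smul_eq_mul]

lemma norm_integral_deriv_smul_weightedSoftmax_le [IsFiniteMeasure ν] [Nonempty ι]
    (hψ : Monotone (deriv ψ)) (hp : ∀ᵐ u ∂ν, p u ∈ stdSimplex ℝ ι) (θ : ι → ℝ) :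
    ‖∫ u, deriv ψ (weightedLogSumExp (p u) θ) • weightedSoftmax (p u) θ ∂ν‖ ≤
      max |deriv ψ (Finset.univ.sup' Finset.univ_nonempty θ)|
        |deriv ψ (Finset.univ.inf' Finset.univ_nonempty θ)| * ν.real univ := by
  refine norm_integral_le_of_norm_le_const ?_
  filter_upwards [hp] with u hu
  rw [norm_smul, Real.norm_eq_abs]
  exact (mul_le_of_le_one_right (abs_nonneg _) (norm_weightedSoftmax_le_one hu θ)).trans
    (abs_comp_weightedLogSumExp_le hψ hu θ)

end ParametricIntegral

section Rows

variable {ι κ : Type*}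

def row (i : ι) : (ι × κ → ℝ) →L[ℝ] (κ → ℝ) :=
  ContinuousLinearMap.pi fun k => ContinuousLinearMap.proj (i, k)

variable [DecidableEq ι] [DecidableEq κ]

lemma row_single_self (i : ι) (j : κ) : row i (Pi.single (i, j) (1 : ℝ)) = Pi.single j 1 := by
  ext k
  simp [row, Pi.single_apply]

lemma row_single_of_ne {i i' : ι} (h : i' ≠ i) (j : κ) :
    row i' (Pi.single (i, j) (1 : ℝ)) = 0 := by
  ext k
  simp [row, h]

lemma sum_comp_row_apply_single [Fintype ι] (D : ι → (κ → ℝ) →L[ℝ] ℝ) (i : ι) (j : κ) :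
    (∑ i', (D i').comp (row i')) (Pi.single (i, j) 1) = D i (Pi.single j 1) := by
  rw [FunLike.coe_sum, Finset.sum_apply, Finset.sum_eq_single i
    (fun i' _ h => by simp [row_single_of_ne h]) (by simp)]
  simp [row_single_self]

end Rows

theorem lambda_differentiable_general
    (ψ : ℝ → ℝ) (hψC1 : ContDiff ℝ 1 ψ) (hψconv : StrictConvexOn ℝ univ ψ)
    (μ : Measure ℝ) [IsProbabilityMeasure μ]
    (M : ℝ) (hsupp : μ (Icc (0 : ℝ) M) = 1)
    (T : ℝ)
    (m n : ℕ) (t : Fin (m + 1) → ℝ) (y : Fin (n + 2) → ℝ)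
    (ht0 : t 0 = 0) (htmono : StrictMono t) (htT : t (Fin.last m) ≤ T)
    (hy0 : y 0 = 0) (hymono : StrictMono y) (hyl : y (Fin.last (n + 1)) = T + M)
    (Θ : Fin m × Fin (n + 1) → ℝ) :
    DifferentiableAt ℝ (Lambda ψ μ t y) Θ ∧
    (∀ (i : Fin m) (j : Fin (n + 1)),
      HasDerivAt (fun s : ℝ => Lambda ψ μ t y (Function.update Θ (i, j) s))
        (LambdaDeriv ψ μ t y Θ i j) (Θ (i, j)) ∧
      |LambdaDeriv ψ μ t y Θ i j| ≤
        (t i.succ - t i.castSucc) *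
          max |deriv ψ (Finset.univ.sup' Finset.univ_nonempty fun k : Fin (n + 1) => Θ (i, k))|
            |deriv ψ (Finset.univ.inf' Finset.univ_nonempty fun k : Fin (n + 1) => Θ (i, k))|) := by
  set q : ℝ → Fin (n + 1) → ℝ := fun u j => pr μ y j u
  have hq : Measurable q := measurable_pi_lambda _ (measurable_pr μ hymono.monotone)
  have hqI : ∀ i : Fin m, ∀ᵐ u ∂volume.restrict (Ioc (t i.castSucc) (t i.succ)),
      q u ∈ stdSimplex ℝ (Fin (n + 1)) := fun i =>
    (ae_restrict_mem measurableSet_Ioc).mono fun u hu =>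
      pr_mem_stdSimplex μ hsupp hy0 hymono.monotone hyl (Ioc_subset_Ioc
        (ht0 ▸ htmono.monotone (Fin.zero_le _)) ((htmono.monotone (Fin.le_last _)).trans htT) hu)
  have hψ' : Monotone (deriv ψ) := monotoneOn_univ.1
    (hψconv.convexOn.monotoneOn_deriv fun x _ => hψC1.differentiable one_ne_zero x)
  set D : Fin m → (Fin (n + 1) → ℝ) →L[ℝ] ℝ := fun i =>
    ∫ u in Ioc (t i.castSucc) (t i.succ),
      deriv ψ (weightedLogSumExp (q u) (row i Θ)) • weightedSoftmax (q u) (row i Θ)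
  have hLambda : HasFDerivAt (Lambda ψ μ t y) (∑ i, (D i).comp (row i)) Θ :=
    HasFDerivAt.fun_sum fun i _ =>
      (hasFDerivAt_integral_comp_weightedLogSumExp hψC1 hq (hqI i) _).comp Θ (row i).hasFDerivAt
  have hDLambda : ∀ i j, D i (Pi.single j 1) = LambdaDeriv ψ μ t y Θ i j := fun i j =>
    integral_deriv_smul_weightedSoftmax_apply_single (hψC1.continuous_deriv le_rfl) hq (hqI i) _ j
  refine ⟨hLambda.differentiableAt, fun i j => ⟨?_, ?_⟩⟩
  · rw [← hDLambda, ← sum_comp_row_apply_single]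
    rw [← Function.update_eq_self (i, j) Θ] at hLambda
    exact hLambda.comp_hasDerivAt _ (hasDerivAt_update Θ (i, j) _)
  · rw [← hDLambda]
    calc |D i (Pi.single j 1)| ≤ ‖D i‖ * ‖(Pi.single j 1 : Fin (n + 1) → ℝ)‖ := (D i).le_opNorm _
      _ = ‖D i‖ := by rw [Pi.norm_single, norm_one, mul_one]
      _ ≤ _ := norm_integral_deriv_smul_weightedSoftmax_le hψ' (hqI i) _
      _ = _ := by
        rw [measureReal_restrict_apply_univ,
          Real.volume_real_Ioc_of_le (htmono (Fin.castSucc_lt_succ (i := i))).le, mul_comm]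
        rfl

/-- `Λ` is (finite and) differentiable at every `Θ`, with partial derivatives
given by `LambdaDeriv`, each bounded by `(t_i − t_{i-1}) · max(|ψ'(max_k θ_ik)|, |ψ'(min_k θ_ik)|)`. -/
theorem lambda_differentiable
    (ψ : ℝ → ℝ) (hψC1 : ContDiff ℝ 1 ψ) (hψconv : StrictConvexOn ℝ univ ψ)
    (μ : Measure ℝ) [IsProbabilityMeasure μ]
    (M : ℝ) (hM : 0 < M) (hsupp : μ (Icc (0 : ℝ) M) = 1)
    (hcdf : Continuous fun x : ℝ => (μ (Iic x)).toReal)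
    (T : ℝ) (hT : 0 < T)
    (m n : ℕ) (t : Fin (m + 1) → ℝ) (y : Fin (n + 2) → ℝ)
    (ht0 : t 0 = 0) (htmono : StrictMono t) (htT : t (Fin.last m) ≤ T)
    (hy0 : y 0 = 0) (hymono : StrictMono y) (hyl : y (Fin.last (n + 1)) = T + M)
    (Θ : Fin m × Fin (n + 1) → ℝ) :
    DifferentiableAt ℝ (Lambda ψ μ t y) Θ ∧
    (∀ (i : Fin m) (j : Fin (n + 1)),
      HasDerivAt (fun s : ℝ => Lambda ψ μ t y (Function.update Θ (i, j) s))
        (LambdaDeriv ψ μ t y Θ i j) (Θ (i, j)) ∧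
      |LambdaDeriv ψ μ t y Θ i j| ≤
        (t i.succ - t i.castSucc) *
          max |deriv ψ (Finset.univ.sup' Finset.univ_nonempty fun k : Fin (n + 1) => Θ (i, k))|
            |deriv ψ (Finset.univ.inf' Finset.univ_nonempty fun k : Fin (n + 1) => Θ (i, k))|) :=
  lambda_differentiable_general ψ hψC1 hψconv μ M hsupp T m n t y ht0 htmono htT hy0 hymono hyl Θ

end Stmt5
end
end

section
/- Let Ū := Σ_{i=1}^G U_i, where (U_n) are i.i.d. with cumulant generating function κ(θ) = log E[exp(θ U_1)] and G is an independent geometric random variable with P(G = n) = F̄(K)^{n−1} F(K) for n ≥ 1 (with F(K) ∈ (0,1]). Then the cumulant generating function of Ū is κ^{(K)}(θ) = κ(θ) + log( F(K) / (1 − F̄(K) e^{κ(θ)}) ) for all θ with F̄(K) e^{κ(θ)} < 1, and consequently the associated infinitesimal logarithmic moment generating function ψ_N^{(K)}(θ) := −(κ^{(K)})^{−1}(−θ) satisfies ψ_N^{(K)}(θ) = ψ_N( log( F(K) e^{θ} + F̄(K) ) ), where ψ_N(θ) := −κ^{−1}(−θ). -/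
/-! Conditioning on `G` and using independence, `E[exp(θ Ū)] = ∑ₙ P(G = n) M(θ)ⁿ` with
`M = exp ∘ κ` the moment generating function of `U 0`; for the geometric law this series sums to
`p M / (1 - (1 - p) M)`. Computing with the lower Lebesgue integral `∫⁻ ofReal (exp (θ X))` makes
the same computation prove that `exp (θ Ū)` is integrable.

For the inverse functions put `c = p eᶿ + 1 - p` and `s = -ψ (log c)`, so that `exp (κ s) = c⁻¹`.
The formula then gives `κ⁽ᴷ⁾ s = -θ = κ⁽ᴷ⁾ (-ψ⁽ᴷ⁾ θ)`, and `κ⁽ᴷ⁾` is injective. -/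

open MeasureTheory Filter Set
open scoped ENNReal

noncomputable section

namespace Stmt9

variable {Ω : Type*} [MeasurableSpace Ω]

/-- `Ū = U 0 + ⋯ + U (G-1)`, the geometric compound of the interarrival times. -/
def Ubar (U : ℕ → Ω → ℝ) (G : Ω → ℕ) (ω : Ω) : ℝ := ∑ i ∈ Finset.range (G ω), U i ω

open ProbabilityTheory Real

theorem tsum_ofReal_geometric_mul {r c : ℝ} (hr₀ : 0 ≤ r) (hr₁ : r < 1) (hc : 0 ≤ c) :
    ∑' n : ℕ, ENNReal.ofReal (r ^ n * c) = ENNReal.ofReal (c / (1 - r)) := by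
  rw [← ENNReal.ofReal_tsum_of_nonneg (fun n => by positivity)
      ((summable_geometric_of_lt_one hr₀ hr₁).mul_right c),
    tsum_mul_right, tsum_geometric_of_lt_one hr₀ hr₁, inv_mul_eq_div]

theorem lintegral_eq_tsum_setLIntegral_fiber {μ : Measure Ω} {G : Ω → ℕ} (hG : Measurable G)
    (f : Ω → ℝ≥0∞) : ∫⁻ ω, f ω ∂μ = ∑' n, ∫⁻ ω in G ⁻¹' {n}, f ω ∂μ := by
  rw [← lintegral_iUnion (fun n => hG (measurableSet_singleton n)) (pairwise_disjoint_fiber G),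
    ← preimage_iUnion, iUnion_of_singleton, preimage_univ, setLIntegral_univ]

theorem _root_.ProbabilityTheory.IndepFun.setLIntegral_preimage {α β : Type*}
    [MeasurableSpace α] [MeasurableSpace β] {μ : Measure Ω} {X : Ω → α} {Y : Ω → β}
    (h : IndepFun X Y μ) (hX : Measurable X) (hY : Measurable Y) {f : α → ℝ≥0∞}
    (hf : Measurable f) {s : Set β} (hs : MeasurableSet s) :
    ∫⁻ ω in Y ⁻¹' s, f (X ω) ∂μ = μ (Y ⁻¹' s) * ∫⁻ ω, f (X ω) ∂μ := by
  have hind : Measurable (s.indicator fun _ => (1 : ℝ≥0∞)) := measurable_one.indicator hs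
  calc ∫⁻ ω in Y ⁻¹' s, f (X ω) ∂μ
      = ∫⁻ ω, f (X ω) * s.indicator (fun _ => 1) (Y ω) ∂μ := by
        rw [← lintegral_indicator (hY hs)]
        congr 1 with ω
        by_cases hω : Y ω ∈ s <;> simp [hω]
    _ = (∫⁻ ω, f (X ω) ∂μ) * ∫⁻ ω, s.indicator (fun _ => 1) (Y ω) ∂μ :=
        lintegral_mul_eq_lintegral_mul_lintegral_of_indepFun'' (hf.comp hX).aemeasurable
          (hind.comp hY).aemeasurable (h.comp hf hind)
    _ = μ (Y ⁻¹' s) * ∫⁻ ω, f (X ω) ∂μ := by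
        rw [mul_comm, ← lintegral_indicator_one (hY hs)]
        rfl

theorem lintegral_comp_eval_eq_tsum {β : Type*} [MeasurableSpace β] {μ : Measure Ω}
    {S : ℕ → Ω → β} {G : Ω → ℕ} (hS : ∀ n, Measurable (S n)) (hG : Measurable G)
    (hindep : ∀ n, IndepFun (S n) G μ) {f : β → ℝ≥0∞} (hf : Measurable f) :
    ∫⁻ ω, f (S (G ω) ω) ∂μ = ∑' n, μ (G ⁻¹' {n}) * ∫⁻ ω, f (S n ω) ∂μ := by
  rw [lintegral_eq_tsum_setLIntegral_fiber hG]
  refine tsum_congr fun n => ?_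
  rw [← (hindep n).setLIntegral_preimage (hS n) hG hf (measurableSet_singleton n)]
  refine setLIntegral_congr_fun (hG (measurableSet_singleton n)) fun ω hω => ?_
  rw [show G ω = n from hω]

theorem _root_.ProbabilityTheory.iIndepFun.lintegral_exp_mul_sum_range {μ : Measure Ω}
    {U : ℕ → Ω → ℝ} (h : iIndepFun U μ) (hU : ∀ n, Measurable (U n))
    (hid : ∀ n, IdentDistrib (U n) (U 0) μ μ) (θ : ℝ) (n : ℕ) :
    ∫⁻ ω, ENNReal.ofReal (exp (θ * ∑ i ∈ Finset.range n, U i ω)) ∂μ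
      = (∫⁻ ω, ENNReal.ofReal (exp (θ * U 0 ω)) ∂μ) ^ n := by
  have hφ : Measurable fun x => ENNReal.ofReal (exp (θ * x)) := by fun_prop
  have hid' (i : ℕ) : ∫⁻ ω, ENNReal.ofReal (exp (θ * U i ω)) ∂μ
      = ∫⁻ ω, ENNReal.ofReal (exp (θ * U 0 ω)) ∂μ :=
    ((hid i).comp hφ).lintegral_eq
  calc ∫⁻ ω, ENNReal.ofReal (exp (θ * ∑ i ∈ Finset.range n, U i ω)) ∂μ
      = ∫⁻ ω, ∏ i ∈ Finset.range n, ENNReal.ofReal (exp (θ * U i ω)) ∂μ := by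
        simp_rw [Finset.mul_sum, exp_sum,
          ENNReal.ofReal_prod_of_nonneg fun i _ => (exp_pos _).le]
    _ = ∏ i ∈ Finset.range n, ∫⁻ ω, ENNReal.ofReal (exp (θ * U i ω)) ∂μ :=
        lintegral_prod_eq_prod_lintegral_of_indepFun _ _ (h.comp _ fun _ => hφ)
          fun i => hφ.comp (hU i)
    _ = _ := by
        rw [Finset.prod_congr rfl fun i _ => hid' i, Finset.prod_const, Finset.card_range]

theorem integrable_exp_mul_and_mgf_eq_of_lintegral_eq {μ : Measure Ω} {X : Ω → ℝ}
    (hX : Measurable X) {t a : ℝ} (ha : 0 ≤ a)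
    (h : ∫⁻ ω, ENNReal.ofReal (exp (t * X ω)) ∂μ = ENNReal.ofReal a) :
    Integrable (fun ω => exp (t * X ω)) μ ∧ mgf X μ t = a := by
  have hnn : 0 ≤ᵐ[μ] fun ω => exp (t * X ω) := ae_of_all _ fun ω => (exp_pos _).le
  refine ⟨⟨by fun_prop, ?_⟩, ?_⟩
  · rw [hasFiniteIntegral_iff_ofReal hnn, h]
    exact ENNReal.ofReal_lt_top
  · rw [mgf, integral_eq_lintegral_of_nonneg_ae hnn (by fun_prop), h, ENNReal.toReal_ofReal ha]

section GeometricTilt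

variable {p : ℝ}

theorem mul_exp_add_one_sub_pos (hp : 0 < p) (hp1 : p ≤ 1) (θ : ℝ) :
    0 < p * exp θ + (1 - p) := by
  have := mul_pos hp (exp_pos θ)
  linarith

theorem one_sub_mul_inv_mul_exp_add_one_sub_lt_one (hp : 0 < p) (hp1 : p ≤ 1) (θ : ℝ) :
    (1 - p) * (p * exp θ + (1 - p))⁻¹ < 1 := by
  rw [← div_eq_mul_inv, div_lt_one (mul_exp_add_one_sub_pos hp hp1 θ)]
  linarith [mul_pos hp (exp_pos θ)]

theorem log_div_one_sub_mul_inv_mul_exp_add_one_sub (hp : 0 < p) (hp1 : p ≤ 1) (θ : ℝ) :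
    log (p / (1 - (1 - p) * (p * exp θ + (1 - p))⁻¹)) = log (p * exp θ + (1 - p)) - θ := by
  have hc := mul_exp_add_one_sub_pos hp hp1 θ
  have hratio : p / (1 - (1 - p) * (p * exp θ + (1 - p))⁻¹) = (p * exp θ + (1 - p)) / exp θ := by
    field_simp
    ring
  rw [hratio, log_div hc.ne' (exp_pos θ).ne', log_exp]

end GeometricTilt

section GeometricLaw

variable {P : Measure Ω} {G : Ω → ℕ} {p : ℝ}

theorem measure_fiber_succ
    (hG : ∀ n : ℕ, 1 ≤ n → P {ω | G ω = n} = ENNReal.ofReal ((1 - p) ^ (n - 1) * p)) (n : ℕ) :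
    P (G ⁻¹' {n + 1}) = ENNReal.ofReal ((1 - p) ^ n * p) := by
  have h := hG (n + 1) n.succ_pos
  rwa [Nat.add_sub_cancel] at h

theorem measure_fiber_zero [IsProbabilityMeasure P] (hGm : Measurable G) (hp : 0 < p)
    (hp1 : p ≤ 1)
    (hG : ∀ n : ℕ, 1 ≤ n → P {ω | G ω = n} = ENNReal.ofReal ((1 - p) ^ (n - 1) * p)) :
    P (G ⁻¹' {0}) = 0 := by
  have htotal : ∑' n, P (G ⁻¹' {n}) = 1 := by
    rw [← measure_iUnion (pairwise_disjoint_fiber G) fun n => hGm (measurableSet_singleton n),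
      ← preimage_iUnion, iUnion_of_singleton, preimage_univ, measure_univ]
  rw [tsum_eq_zero_add' ENNReal.summable] at htotal
  simp_rw [measure_fiber_succ hG,
    tsum_ofReal_geometric_mul (r := 1 - p) (by linarith) (by linarith) hp.le,
    sub_sub_cancel, div_self hp.ne', ENNReal.ofReal_one] at htotal
  simpa using htotal

theorem tsum_measure_fiber_mul_pow [IsProbabilityMeasure P] (hGm : Measurable G) (hp : 0 < p)
    (hp1 : p ≤ 1) (hG : ∀ n : ℕ, 1 ≤ n → P {ω | G ω = n} = ENNReal.ofReal ((1 - p) ^ (n - 1) * p))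
    {x : ℝ} (hx : 0 ≤ x) (hqx : (1 - p) * x < 1) :
    ∑' n, P (G ⁻¹' {n}) * ENNReal.ofReal x ^ n = ENNReal.ofReal (p * x / (1 - (1 - p) * x)) := by
  have hq : 0 ≤ 1 - p := by linarith
  rw [tsum_eq_zero_add' ENNReal.summable, measure_fiber_zero hGm hp hp1 hG, zero_mul, zero_add,
    ← tsum_ofReal_geometric_mul (by positivity) hqx (by positivity)]
  refine tsum_congr fun n => ?_
  rw [measure_fiber_succ hG, ← ENNReal.ofReal_pow hx, ← ENNReal.ofReal_mul (by positivity)]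
  congr 1
  rw [mul_pow, pow_succ]
  ring

end GeometricLaw

section GeometricCompound

variable {P : Measure Ω} {U : ℕ → Ω → ℝ} {G : Ω → ℕ}

theorem measurable_Ubar (hUm : ∀ n, Measurable (U n)) (hGm : Measurable G) :
    Measurable (Ubar U G) := by
  have hS : Measurable fun q : Ω × ℕ => ∑ i ∈ Finset.range q.2, U i q.1 :=
    measurable_from_prod_countable_left fun n =>
      Finset.measurable_fun_sum (Finset.range n) fun i _ => hUm i
  exact hS.comp (measurable_id.prodMk hGm)

theorem indepFun_sum_range_of_iIndepFun_option (hUm : ∀ n, Measurable (U n))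
    (hGm : Measurable G)
    (hIndep : iIndepFun (fun o : Option ℕ => Option.elim o (fun ω => (G ω : ℝ)) U) P) (n : ℕ) :
    IndepFun (fun ω => ∑ i ∈ Finset.range n, U i ω) G P := by
  have hm : ∀ o, Measurable (Option.elim o (fun ω => (G ω : ℝ)) U) := by
    rintro (_ | i)
    exacts [measurable_from_top.comp hGm, hUm i]
  have h := (hIndep.indepFun_finsetSum_of_notMem hm (i := none)
    (s := (Finset.range n).map ⟨some, Option.some_injective ℕ⟩) (by simp)).comp
    measurable_id Nat.measurable_floor
  convert h using 1
  · ext ω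
    simp [Finset.sum_map]
  · ext ω
    simp

theorem lintegral_exp_mul_Ubar (hUm : ∀ n, Measurable (U n)) (hGm : Measurable G)
    (hIndep : iIndepFun (fun o : Option ℕ => Option.elim o (fun ω => (G ω : ℝ)) U) P)
    (hUid : ∀ n, Measure.map (U n) P = Measure.map (U 0) P) (θ : ℝ) :
    ∫⁻ ω, ENNReal.ofReal (exp (θ * Ubar U G ω)) ∂P
      = ∑' n, P (G ⁻¹' {n}) * (∫⁻ ω, ENNReal.ofReal (exp (θ * U 0 ω)) ∂P) ^ n := by
  have hU : iIndepFun U P := hIndep.precomp (g := some) (Option.some_injective ℕ)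
  have hid (n : ℕ) : IdentDistrib (U n) (U 0) P P :=
    ⟨(hUm n).aemeasurable, (hUm 0).aemeasurable, hUid n⟩
  refine (lintegral_comp_eval_eq_tsum (S := fun n ω => ∑ i ∈ Finset.range n, U i ω)
    (fun n => Finset.measurable_fun_sum _ fun i _ => hUm i) hGm
    (indepFun_sum_range_of_iIndepFun_option hUm hGm hIndep)
    (f := fun x => ENNReal.ofReal (exp (θ * x))) (by fun_prop)).trans ?_
  simp_rw [hU.lintegral_exp_mul_sum_range hUm hid]

theorem integrable_exp_mul_Ubar_and_cgf_eq [IsProbabilityMeasure P]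
    (hUm : ∀ n, Measurable (U n)) (hGm : Measurable G)
    (hIndep : iIndepFun (fun o : Option ℕ => Option.elim o (fun ω => (G ω : ℝ)) U) P)
    (hUid : ∀ n, Measure.map (U n) P = Measure.map (U 0) P) {p : ℝ} (hp : 0 < p) (hp1 : p ≤ 1)
    (hG : ∀ n : ℕ, 1 ≤ n → P {ω | G ω = n} = ENNReal.ofReal ((1 - p) ^ (n - 1) * p))
    {θ : ℝ} (hθ : Integrable (fun ω => exp (θ * U 0 ω)) P)
    (hlt : (1 - p) * mgf (U 0) P θ < 1) :
    Integrable (fun ω => exp (θ * Ubar U G ω)) P ∧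
      cgf (Ubar U G) P θ = cgf (U 0) P θ + log (p / (1 - (1 - p) * mgf (U 0) P θ)) := by
  set M := mgf (U 0) P θ
  have hM : 0 < M := mgf_pos hθ
  have hD : 0 < 1 - (1 - p) * M := by linarith
  have hL : ∫⁻ ω, ENNReal.ofReal (exp (θ * U 0 ω)) ∂P = ENNReal.ofReal M :=
    (ofReal_integral_eq_lintegral_ofReal hθ (ae_of_all _ fun ω => (exp_pos _).le)).symm
  obtain ⟨hint, hmgf⟩ := integrable_exp_mul_and_mgf_eq_of_lintegral_eq (measurable_Ubar hUm hGm)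
    (a := p * M / (1 - (1 - p) * M)) (by positivity)
    (by rw [lintegral_exp_mul_Ubar hUm hGm hIndep hUid, hL,
      tsum_measure_fiber_mul_pow hGm hp hp1 hG hM.le hlt])
  refine ⟨hint, ?_⟩
  rw [cgf, cgf, hmgf, ← log_mul hM.ne' (div_pos hp hD).ne']
  congr 1
  ring

end GeometricCompound

theorem cgf_geometric_compound_general
    (P : Measure Ω) [IsProbabilityMeasure P] (U : ℕ → Ω → ℝ) (G : Ω → ℕ)
    (hUmeas : ∀ n, Measurable (U n)) (hGmeas : Measurable G)
    (hIndep : ProbabilityTheory.iIndepFun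
      (fun o : Option ℕ => Option.elim o (fun ω => (G ω : ℝ)) U) P)
    (hUid : ∀ n, Measure.map (U n) P = Measure.map (U 0) P)
    (p : ℝ) (hp : 0 < p) (hp1 : p ≤ 1)
    (hG : ∀ n : ℕ, 1 ≤ n → P {ω | G ω = n} = ENNReal.ofReal ((1 - p) ^ (n - 1) * p))
    (ψ ψK : ℝ → ℝ)
    (hψ : ∀ θ : ℝ, ProbabilityTheory.cgf (U 0) P (-(ψ θ)) = -θ)
    (hψdom : ∀ θ : ℝ, Integrable (fun ω => Real.exp (-(ψ θ) * U 0 ω)) P)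
    (hψK : ∀ θ : ℝ, ProbabilityTheory.cgf (Ubar U G) P (-(ψK θ)) = -θ)
    (hψKdom : ∀ θ : ℝ, Integrable (fun ω => Real.exp (-(ψK θ) * Ubar U G ω)) P)
    (hκKinj : InjOn (ProbabilityTheory.cgf (Ubar U G) P)
      {s : ℝ | Integrable (fun ω => Real.exp (s * Ubar U G ω)) P}) :
    (∀ θ : ℝ, Integrable (fun ω => Real.exp (θ * U 0 ω)) P →
        (1 - p) * Real.exp (ProbabilityTheory.cgf (U 0) P θ) < 1 →
        ProbabilityTheory.cgf (Ubar U G) P θ =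
          ProbabilityTheory.cgf (U 0) P θ +
            Real.log (p / (1 - (1 - p) * Real.exp (ProbabilityTheory.cgf (U 0) P θ)))) ∧
    (∀ θ : ℝ, ψK θ = ψ (Real.log (p * Real.exp θ + (1 - p)))) := by
  have hκK {θ : ℝ} (hθ : Integrable (fun ω => exp (θ * U 0 ω)) P)
      (hlt : (1 - p) * mgf (U 0) P θ < 1) :=
    integrable_exp_mul_Ubar_and_cgf_eq hUmeas hGmeas hIndep hUid hp hp1 hG hθ hlt
  refine ⟨fun θ hθ hlt => ?_, fun θ => ?_⟩
  · rw [exp_cgf hθ] at hlt ⊢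
    exact (hκK hθ hlt).2
  set c := p * exp θ + (1 - p)
  have hM : mgf (U 0) P (-ψ (log c)) = c⁻¹ := by
    rw [← exp_cgf (hψdom _), hψ, exp_neg, exp_log (mul_exp_add_one_sub_pos hp hp1 θ)]
  obtain ⟨hint, hcgf⟩ :=
    hκK (hψdom (log c)) (hM ▸ one_sub_mul_inv_mul_exp_add_one_sub_lt_one hp hp1 θ)
  have hκK_at : cgf (Ubar U G) P (-ψ (log c)) = -θ := by
    rw [hcgf, hψ, hM, log_div_one_sub_mul_inv_mul_exp_add_one_sub hp hp1 θ]
    ring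
  exact neg_injective (hκKinj (hψKdom θ) hint (by rw [hψK, hκK_at]))

/-- if `Ū = ∑_{i=1}^G U_i` with `G` geometric (`P(G = n) = q^{n-1} p`)
independent of the i.i.d. `(U_n)`, then the cgf of `Ū` is
`κ^{(K)}(θ) = κ(θ) + log(p / (1 − q e^{κ(θ)}))` whenever `q e^{κ(θ)} < 1`, and consequently
the inverse functions satisfy `ψ^{(K)}(θ) = ψ(log(p e^θ + q))`.  Here `p = F(K)` and
`q = F̄(K) = 1 − p`. -/
theorem cgf_geometric_compound
    (P : Measure Ω) [IsProbabilityMeasure P] (U : ℕ → Ω → ℝ) (G : Ω → ℕ)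
    (hUmeas : ∀ n, Measurable (U n)) (hGmeas : Measurable G)
    (hIndep : ProbabilityTheory.iIndepFun
      (fun o : Option ℕ => Option.elim o (fun ω => (G ω : ℝ)) U) P)
    (hUid : ∀ n, Measure.map (U n) P = Measure.map (U 0) P)
    (hUpos : ∀ n, ∀ᵐ ω ∂P, 0 < U n ω)
    (hExp : ∃ θ > 0, Integrable (fun ω => Real.exp (θ * U 0 ω)) P)
    (p : ℝ) (hp : 0 < p) (hp1 : p ≤ 1)
    (hG : ∀ n : ℕ, 1 ≤ n → P {ω | G ω = n} = ENNReal.ofReal ((1 - p) ^ (n - 1) * p))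
    (ψ ψK : ℝ → ℝ)
    (hψ : ∀ θ : ℝ, ProbabilityTheory.cgf (U 0) P (-(ψ θ)) = -θ)
    (hψdom : ∀ θ : ℝ, Integrable (fun ω => Real.exp (-(ψ θ) * U 0 ω)) P)
    (hψK : ∀ θ : ℝ, ProbabilityTheory.cgf (Ubar U G) P (-(ψK θ)) = -θ)
    (hψKdom : ∀ θ : ℝ, Integrable (fun ω => Real.exp (-(ψK θ) * Ubar U G ω)) P)
    (hκKinj : InjOn (ProbabilityTheory.cgf (Ubar U G) P)
      {s : ℝ | Integrable (fun ω => Real.exp (s * Ubar U G ω)) P}) :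
    (∀ θ : ℝ, Integrable (fun ω => Real.exp (θ * U 0 ω)) P →
        (1 - p) * Real.exp (ProbabilityTheory.cgf (U 0) P θ) < 1 →
        ProbabilityTheory.cgf (Ubar U G) P θ =
          ProbabilityTheory.cgf (U 0) P θ +
            Real.log (p / (1 - (1 - p) * Real.exp (ProbabilityTheory.cgf (U 0) P θ)))) ∧
    (∀ θ : ℝ, ψK θ = ψ (Real.log (p * Real.exp θ + (1 - p)))) :=
  cgf_geometric_compound_general P U G hUmeas hGmeas hIndep hUid p hp hp1 hG ψ ψK hψ hψdom hψK
    hψKdom hκKinj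

end Stmt9
end
end
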